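/- With the setup of the API selection ILP (Z ∈ {0,1}^{N×K}, rows sum to 1, average cost ≤ b, costs c_k ≥ 0 with c_{base} = 0, accuracies a_k(x_n) ∈ [0,1] drawn from a continuous distribution), the rounded LP solution Z' (which agrees with the LP optimum on rows with a single nonzero entry and assigns the zero-cost base service on the remaining at most one row) achieves, with probability 1, average accuracy (1/N)∑_n ∑_k Z'_{n,k} a_k(x_n) ≥ (1/N)∑_n ∑_k Z*_{n,k} a_k(x_n) − 1/N, where Z* is an optimal solution of the ILP, while satisfying all ILP constraints. -/

import Mathlib

/-!
If an optimal LP solution had two fractional rows `n₁ ≠ n₂`, each would contain two entries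
strictly between 0 and 1. Shifting mass between these two entries of row `n₁` and between those
of row `n₂`, with weights orthogonal to the cost differences, preserves the row sums and the
cost and stays inside the box for small steps in either direction. Optimality then forces the
objective to be flat along this direction, i.e. a fixed nonzero linear form in the accuracies
vanishes. That happens only on a hyperplane, which is a null set for an absolutely continuous
distribution. So almost surely at most one row is fractional, and rounding it to the zero-cost
base service keeps the budget and loses at most one unit of total accuracy, since accuracies
lie in `[0, 1]`.
-/

open MeasureTheory Filter Topology Finset

section Hyperplane

variable {ι κ : Type*} [Fintype ι] [Fintype κ]

theorem volume_setOf_sum_sum_mul_eq_zero {P : ι → κ → ℝ} (hP : P ≠ 0) :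
    volume {a : ι → κ → ℝ | ∑ i, ∑ j, P i j * a i j = 0} = 0 := by
  let L : (ι → κ → ℝ) →ₗ[ℝ] ℝ :=
    ∑ i, ∑ j, P i j •
      (LinearMap.proj (R := ℝ) j ∘ₗ LinearMap.proj (φ := fun _ : ι => κ → ℝ) i)
  have hL : ∀ a, L a = ∑ i, ∑ j, P i j * a i j := fun a => by simp [L]
  have hLP : L P ≠ 0 := by
    rw [hL, ← Fintype.sum_prod_type']
    intro h
    refine hP (funext₂ fun i j => mul_self_eq_zero.1 ?_)
    exact congrFun ((Fintype.sum_eq_zero_iff_of_nonneg fun x => mul_self_nonneg _).1 h) (i, j)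
  have hker : {a : ι → κ → ℝ | ∑ i, ∑ j, P i j * a i j = 0} = LinearMap.ker L := by
    ext a
    simp [hL]
  rw [hker]
  exact Measure.addHaar_submodule _ _ fun htop => hLP (by simp [← LinearMap.mem_ker, htop])

end Hyperplane

section Exchange

variable {N K : ℕ}

def rowExchange (n : Fin N) (k k' : Fin K) : Fin N → Fin K → ℝ :=
  Pi.single n (Pi.single k 1 - Pi.single k' 1)

theorem sum_rowExchange (n m : Fin N) (k k' : Fin K) : ∑ j, rowExchange n k k' m j = 0 := by
  by_cases h : m = n
  · subst h; simp [rowExchange]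
  · simp [rowExchange, h]

theorem rowExchange_apply_of_ne {n m : Fin N} (k k' j : Fin K) (hm : m ≠ n) :
    rowExchange n k k' m j = 0 := by
  simp [rowExchange, hm]

theorem sum_sum_rowExchange_mul (n : Fin N) (k k' : Fin K) (g : Fin N → Fin K → ℝ) :
    ∑ m, ∑ j, rowExchange n k k' m j * g m j = g n k - g n k' := by
  rw [Fintype.sum_eq_single n fun m hm => by simp [rowExchange_apply_of_ne _ _ _ hm]]
  simp [rowExchange, Pi.single_apply, sub_mul, sum_sub_distrib]

theorem rowExchange_apply_left {n : Fin N} {k k' : Fin K} (hk : k ≠ k') :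
    rowExchange n k k' n k = 1 := by
  simp [rowExchange, hk]

theorem eq_of_rowExchange_apply_ne_zero {n m : Fin N} {k k' j : Fin K}
    (h : rowExchange n k k' m j ≠ 0) : m = n ∧ (j = k ∨ j = k') := by
  by_contra hc
  apply h
  by_cases hm : m = n
  · subst hm
    simp_all [rowExchange, Pi.single_apply]
  · exact rowExchange_apply_of_ne k k' j hm

noncomputable def orthCoeffs (d₁ d₂ : ℝ) : ℝ × ℝ :=
  if d₁ = 0 ∧ d₂ = 0 then (1, 0) else (d₂, -d₁)

theorem orthCoeffs_ne_zero (d₁ d₂ : ℝ) : orthCoeffs d₁ d₂ ≠ 0 := by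
  unfold orthCoeffs
  split_ifs with h
  · simp
  · contrapose! h
    simp_all [Prod.ext_iff]

theorem orthCoeffs_orthogonal (d₁ d₂ : ℝ) :
    (orthCoeffs d₁ d₂).1 * d₁ + (orthCoeffs d₁ d₂).2 * d₂ = 0 := by
  unfold orthCoeffs
  split_ifs with h
  · simp [h.1]
  · ring

noncomputable def exchange (c : Fin K → ℝ) (n₁ n₂ : Fin N) (k₁ k₁' k₂ k₂' : Fin K) :
    Fin N → Fin K → ℝ :=
  (orthCoeffs (c k₁ - c k₁') (c k₂ - c k₂')).1 • rowExchange n₁ k₁ k₁' +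
    (orthCoeffs (c k₁ - c k₁') (c k₂ - c k₂')).2 • rowExchange n₂ k₂ k₂'

variable (c : Fin K → ℝ) (n₁ n₂ : Fin N) (k₁ k₁' k₂ k₂' : Fin K)

theorem sum_exchange (m : Fin N) : ∑ j, exchange c n₁ n₂ k₁ k₁' k₂ k₂' m j = 0 := by
  simp [exchange, sum_add_distrib, ← mul_sum, sum_rowExchange]

theorem sum_sum_exchange_mul (g : Fin N → Fin K → ℝ) :
    ∑ m, ∑ j, exchange c n₁ n₂ k₁ k₁' k₂ k₂' m j * g m j =
      (orthCoeffs (c k₁ - c k₁') (c k₂ - c k₂')).1 * (g n₁ k₁ - g n₁ k₁') +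
        (orthCoeffs (c k₁ - c k₁') (c k₂ - c k₂')).2 * (g n₂ k₂ - g n₂ k₂') := by
  simp [exchange, add_mul, sum_add_distrib, mul_assoc, ← mul_sum, sum_sum_rowExchange_mul]

theorem sum_sum_exchange_mul_cost :
    ∑ m, ∑ j, exchange c n₁ n₂ k₁ k₁' k₂ k₂' m j * c j = 0 :=
  (sum_sum_exchange_mul c n₁ n₂ k₁ k₁' k₂ k₂' fun _ j => c j).trans
    (orthCoeffs_orthogonal _ _)

variable {c n₁ n₂ k₁ k₁' k₂ k₂'}

theorem exchange_ne_zero (hn : n₁ ≠ n₂) (hk₁ : k₁ ≠ k₁') (hk₂ : k₂ ≠ k₂') :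
    exchange c n₁ n₂ k₁ k₁' k₂ k₂' ≠ 0 := by
  intro h
  have h₁ := congrFun₂ h n₁ k₁
  have h₂ := congrFun₂ h n₂ k₂
  simp only [exchange, Pi.add_apply, Pi.smul_apply, smul_eq_mul, rowExchange_apply_left hk₁,
    rowExchange_apply_left hk₂, rowExchange_apply_of_ne _ _ _ hn,
    rowExchange_apply_of_ne _ _ _ hn.symm, Pi.zero_apply, mul_zero, mul_one, add_zero,
    zero_add] at h₁ h₂
  exact orthCoeffs_ne_zero _ _ (Prod.ext h₁ h₂)

theorem eq_of_exchange_apply_ne_zero {m : Fin N} {j : Fin K}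
    (h : exchange c n₁ n₂ k₁ k₁' k₂ k₂' m j ≠ 0) :
    m = n₁ ∧ (j = k₁ ∨ j = k₁') ∨ m = n₂ ∧ (j = k₂ ∨ j = k₂') := by
  simp only [exchange, Pi.add_apply, Pi.smul_apply, smul_eq_mul] at h
  by_cases h₁ : rowExchange n₁ k₁ k₁' m j = 0
  · rw [h₁, mul_zero, zero_add] at h
    exact Or.inr (eq_of_rowExchange_apply_ne_zero (right_ne_zero_of_mul h))
  · exact Or.inl (eq_of_rowExchange_apply_ne_zero h₁)

end Exchange

section Genericity

variable {N K : ℕ}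

def IsGeneric (c : Fin K → ℝ) (a : Fin N → Fin K → ℝ) : Prop :=
  ∀ n₁ n₂ k₁ k₁' k₂ k₂', n₁ ≠ n₂ → k₁ ≠ k₁' → k₂ ≠ k₂' →
    ∑ n, ∑ k, exchange c n₁ n₂ k₁ k₁' k₂ k₂' n k * a n k ≠ 0

theorem ae_isGeneric (c : Fin K → ℝ) {μ : Measure (Fin N → Fin K → ℝ)} (hac : μ ≪ volume) :
    ∀ᵐ a ∂μ, IsGeneric c a := by
  simp only [IsGeneric, eventually_all]
  intro n₁ n₂ k₁ k₁' k₂ k₂' hn hk₁ hk₂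
  exact ae_iff.2 <| by
    simpa using hac (volume_setOf_sum_sum_mul_eq_zero (exchange_ne_zero hn hk₁ hk₂))

end Genericity

section LP

variable {N K : ℕ}

theorem sum_sum_add_smul_mul (Z P g : Fin N → Fin K → ℝ) (s : ℝ) :
    ∑ n, ∑ k, (Z + s • P) n k * g n k =
      ∑ n, ∑ k, Z n k * g n k + s * ∑ n, ∑ k, P n k * g n k := by
  simp [add_mul, sum_add_distrib, mul_sum, mul_assoc]

def LPFeasible (c : Fin K → ℝ) (b : ℝ) (W : Fin N → Fin K → ℝ) : Prop :=
  (∀ n k, W n k ∈ Set.Icc (0 : ℝ) 1) ∧ (1 / N : ℝ) * ∑ n, ∑ k, W n k * c k ≤ b ∧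
    ∀ n, ∑ k, W n k = 1

def IsLPOptimal (c : Fin K → ℝ) (b : ℝ) (a Z : Fin N → Fin K → ℝ) : Prop :=
  LPFeasible c b Z ∧ ∀ W, LPFeasible c b W →
    (1 / N : ℝ) * ∑ n, ∑ k, W n k * a n k ≤ (1 / N : ℝ) * ∑ n, ∑ k, Z n k * a n k

variable {c : Fin K → ℝ} {b : ℝ} {a Z : Fin N → Fin K → ℝ}

theorem LPFeasible.eventually_add_smul {P : Fin N → Fin K → ℝ} (hZ : LPFeasible c b Z)
    (hrow : ∀ n, ∑ k, P n k = 0) (hcost : ∑ n, ∑ k, P n k * c k = 0)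
    (hsupp : ∀ n k, P n k ≠ 0 → Z n k ∈ Set.Ioo 0 1) :
    ∀ᶠ s in 𝓝 (0 : ℝ), LPFeasible c b (Z + s • P) := by
  have hbox : ∀ n k, ∀ᶠ s in 𝓝 (0 : ℝ), Z n k + s * P n k ∈ Set.Icc 0 1 := by
    intro n k
    by_cases hP : P n k = 0
    · simp [hP, hZ.1 n k]
    · have hcont : Tendsto (fun s => Z n k + s * P n k) (𝓝 0) (𝓝 (Z n k)) :=
        (continuous_const.add (continuous_id.mul continuous_const)).tendsto' 0 _ (by simp)
      exact (hcont.eventually (isOpen_Ioo.mem_nhds (hsupp n k hP))).mono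
        fun s hs => Set.Ioo_subset_Icc_self hs
  filter_upwards [eventually_all.2 fun n => eventually_all.2 (hbox n)] with s hs
  refine ⟨hs, ?_, fun n => ?_⟩
  · simpa only [sum_sum_add_smul_mul Z P (fun _ k => c k) s, hcost, mul_zero, add_zero]
      using hZ.2.1
  · simp [sum_add_distrib, ← mul_sum, hrow, hZ.2.2]

theorem exists_ne_mem_Ioo_of_card_ne_one {z : Fin K → ℝ} (hz : ∀ k, 0 ≤ z k)
    (hsum : ∑ k, z k = 1) (h : #{k | z k ≠ 0} ≠ 1) :
    ∃ k k', k ≠ k' ∧ z k ∈ Set.Ioo 0 1 ∧ z k' ∈ Set.Ioo 0 1 := by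
  have hne : ({k | z k ≠ 0} : Finset (Fin K)).Nonempty :=
    nonempty_of_sum_ne_zero (by rw [sum_filter_ne_zero, hsum]; exact one_ne_zero)
  obtain ⟨k, hk, k', hk', hkk'⟩ := one_lt_card.1 (lt_of_le_of_ne hne.card_pos h.symm)
  have hpos : 0 < z k := (hz k).lt_of_ne (mem_filter.1 hk).2.symm
  have hpos' : 0 < z k' := (hz k').lt_of_ne (mem_filter.1 hk').2.symm
  have hpair : z k + z k' ≤ 1 := by
    rw [← hsum, ← sum_pair hkk']
    exact sum_le_sum_of_subset_of_nonneg (subset_univ _) fun j _ _ => hz j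
  exact ⟨k, k', hkk', ⟨hpos, by linarith⟩, hpos', by linarith⟩

theorem IsLPOptimal.eq_of_card_ne_one (hZ : IsLPOptimal c b a Z) (hgen : IsGeneric c a)
    {n₁ n₂ : Fin N} (h₁ : #{k | Z n₁ k ≠ 0} ≠ 1) (h₂ : #{k | Z n₂ k ≠ 0} ≠ 1) : n₁ = n₂ := by
  by_contra hn
  obtain ⟨k₁, k₁', hk₁, hz₁, hz₁'⟩ :=
    exists_ne_mem_Ioo_of_card_ne_one (fun k => (hZ.1.1 n₁ k).1) (hZ.1.2.2 n₁) h₁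
  obtain ⟨k₂, k₂', hk₂, hz₂, hz₂'⟩ :=
    exists_ne_mem_Ioo_of_card_ne_one (fun k => (hZ.1.1 n₂ k).1) (hZ.1.2.2 n₂) h₂
  set P := exchange c n₁ n₂ k₁ k₁' k₂ k₂'
  set D := ∑ n, ∑ k, P n k * a n k
  have hfeas : ∀ᶠ s in 𝓝 (0 : ℝ), LPFeasible c b (Z + s • P) := by
    refine hZ.1.eventually_add_smul (sum_exchange c n₁ n₂ k₁ k₁' k₂ k₂')
      (sum_sum_exchange_mul_cost ..) ?_
    intro m j hP
    rcases eq_of_exchange_apply_ne_zero hP with ⟨rfl, rfl | rfl⟩ | ⟨rfl, rfl | rfl⟩ <;> assumption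
  -- the objective is affine along the zero-cost direction `P` and maximal at `s = 0`
  have hmax : IsLocalMax (fun s => (1 / N : ℝ) * (∑ n, ∑ k, Z n k * a n k + s * D)) 0 :=
    hfeas.mono fun s hs => by
      simpa only [sum_sum_add_smul_mul, zero_mul, add_zero] using hZ.2 _ hs
  have hderiv : HasDerivAt (fun s => (1 / N : ℝ) * (∑ n, ∑ k, Z n k * a n k + s * D))
      ((1 / N : ℝ) * D) 0 := by
    simpa using (((hasDerivAt_id (0 : ℝ)).mul_const D).const_add _).const_mul (1 / N : ℝ)
  have hN_inv : (1 / N : ℝ) ≠ 0 := by simpa using n₁.pos.ne'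
  exact hgen n₁ n₂ k₁ k₁' k₂ k₂' hn hk₁ hk₂
    ((mul_eq_zero.1 (hmax.hasDerivAt_eq_zero hderiv)).resolve_left hN_inv)

end LP

section Rounding

variable {K : ℕ} (base : Fin K) {z : Fin K → ℝ}

noncomputable def roundRow (z : Fin K → ℝ) (k : Fin K) : ℝ :=
  if #{k' | z k' ≠ 0} = 1 then z k else if k = base then 1 else 0

theorem roundRow_of_card_eq_one (h : #{k | z k ≠ 0} = 1) : roundRow base z = z :=
  funext fun _ => if_pos h

theorem roundRow_of_card_ne_one (h : #{k | z k ≠ 0} ≠ 1) :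
    roundRow base z = fun k => if k = base then 1 else 0 :=
  funext fun _ => if_neg h

theorem roundRow_eq_zero_or_one (hsum : ∑ k, z k = 1) (k : Fin K) :
    roundRow base z k = 0 ∨ roundRow base z k = 1 := by
  by_cases h : #{k | z k ≠ 0} = 1
  · obtain ⟨k₀, hk₀⟩ := card_eq_one.1 h
    have hzero : ∀ j, j ≠ k₀ → z j = 0 := fun j hj => by
      by_contra hzj
      exact hj (mem_singleton.1 (hk₀ ▸ mem_filter.2 ⟨mem_univ j, hzj⟩))
    have hone : z k₀ = 1 := by rwa [Fintype.sum_eq_single k₀ hzero] at hsum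
    rw [roundRow_of_card_eq_one base h]
    by_cases hk : k = k₀
    · exact Or.inr (hk ▸ hone)
    · exact Or.inl (hzero k hk)
  · simp only [roundRow_of_card_ne_one base h]
    split_ifs <;> simp

theorem sum_roundRow (hsum : ∑ k, z k = 1) : ∑ k, roundRow base z k = 1 := by
  by_cases h : #{k | z k ≠ 0} = 1
  · rwa [roundRow_of_card_eq_one base h]
  · simp [roundRow_of_card_ne_one base h]

theorem sum_roundRow_mul_le {g : Fin K → ℝ} (hz : ∀ k, 0 ≤ z k) (hg : ∀ k, 0 ≤ g k)
    (hbase : g base = 0) : ∑ k, roundRow base z k * g k ≤ ∑ k, z k * g k := by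
  by_cases h : #{k | z k ≠ 0} = 1
  · rw [roundRow_of_card_eq_one base h]
  · simpa [roundRow_of_card_ne_one base h, hbase] using
      sum_nonneg fun k _ => mul_nonneg (hz k) (hg k)

theorem sum_mul_le_sum_roundRow_mul_add_one {a : Fin K → ℝ} (hz : ∀ k, 0 ≤ z k)
    (hsum : ∑ k, z k = 1) (ha : ∀ k, a k ∈ Set.Icc (0 : ℝ) 1) :
    ∑ k, z k * a k ≤ ∑ k, roundRow base z k * a k + 1 := by
  have hle : ∑ k, z k * a k ≤ 1 :=
    hsum ▸ sum_le_sum fun k _ => mul_le_of_le_one_right (hz k) (ha k).2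
  have hround : 0 ≤ ∑ k, roundRow base z k * a k := by
    refine sum_nonneg fun k _ => mul_nonneg ?_ (ha k).1
    rcases roundRow_eq_zero_or_one base hsum k with h | h <;> norm_num [h]
  linarith

end Rounding

theorem sum_sum_mul_le_sum_sum_roundRow_mul_add_one {N K : ℕ} (base : Fin K)
    {a Z : Fin N → Fin K → ℝ} (hZ : ∀ n k, 0 ≤ Z n k) (hrow : ∀ n, ∑ k, Z n k = 1)
    (ha : ∀ n k, a n k ∈ Set.Icc (0 : ℝ) 1)
    (hsparse : ∀ n₁ n₂, #{k | Z n₁ k ≠ 0} ≠ 1 → #{k | Z n₂ k ≠ 0} ≠ 1 → n₁ = n₂) :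
    ∑ n, ∑ k, Z n k * a n k ≤ ∑ n, ∑ k, roundRow base (Z n) k * a n k + 1 := by
  set d := fun n => ∑ k, Z n k * a n k - ∑ k, roundRow base (Z n) k * a n k
  have hB : #{n | #{k | Z n k ≠ 0} ≠ 1} ≤ 1 :=
    card_le_one.2 fun n₁ h₁ n₂ h₂ => hsparse n₁ n₂ (mem_filter.1 h₁).2 (mem_filter.1 h₂).2
  have hd : ∑ n, d n ≤ 1 := calc
    ∑ n, d n = ∑ n with #{k | Z n k ≠ 0} ≠ 1, d n :=
      (sum_filter_of_ne (p := fun n => #{k | Z n k ≠ 0} ≠ 1) fun n _ hn h =>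
        hn (by simp [d, roundRow_of_card_eq_one base h])).symm
    _ ≤ #{n | #{k | Z n k ≠ 0} ≠ 1} • (1 : ℝ) := sum_le_card_nsmul _ _ _ fun n _ => by
      linarith [sum_mul_le_sum_roundRow_mul_add_one base (hZ n) (hrow n) (ha n)]
    _ ≤ 1 := by simpa using hB
  simp only [d, sum_sub_distrib] at hd
  linarith

theorem stmt_6_general {N K : ℕ}
    (c : Fin K → ℝ) (base : Fin K) (b : ℝ)
    (hc : ∀ k, 0 ≤ c k) (hbase : c base = 0)
    (μ : Measure (Fin N → Fin K → ℝ))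
    (hac : μ ≪ volume)
    (hsupp : ∀ᵐ a ∂μ, ∀ n k, a n k ∈ Set.Icc (0:ℝ) 1) :
    ∀ᵐ a ∂μ, ∀ ZLP : Fin N → Fin K → ℝ,
      (∀ n k, ZLP n k ∈ Set.Icc (0:ℝ) 1) →
      (1 / N : ℝ) * ∑ n, ∑ k, ZLP n k * c k ≤ b →
      (∀ n, ∑ k, ZLP n k = 1) →
      (∀ W : Fin N → Fin K → ℝ,
        (∀ n k, W n k ∈ Set.Icc (0:ℝ) 1) →
        (1 / N : ℝ) * ∑ n, ∑ k, W n k * c k ≤ b →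
        (∀ n, ∑ k, W n k = 1) →
        (1 / N : ℝ) * ∑ n, ∑ k, W n k * a n k ≤
          (1 / N : ℝ) * ∑ n, ∑ k, ZLP n k * a n k) →
      (let Z' : Fin N → Fin K → ℝ := fun n k =>
        if (((Finset.univ : Finset (Fin K)).filter fun k' => ZLP n k' ≠ 0)).card = 1
        then ZLP n k else (if k = base then 1 else 0);
      ((∀ n k, Z' n k = 0 ∨ Z' n k = 1) ∧
        (1 / N : ℝ) * ∑ n, ∑ k, Z' n k * c k ≤ b ∧
        (∀ n, ∑ k, Z' n k = 1)) ∧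
      ∀ Z : Fin N → Fin K → ℝ,
        (∀ n k, Z n k = 0 ∨ Z n k = 1) →
        (1 / N : ℝ) * ∑ n, ∑ k, Z n k * c k ≤ b →
        (∀ n, ∑ k, Z n k = 1) →
        (1 / N : ℝ) * ∑ n, ∑ k, Z n k * a n k - 1 / N ≤
          (1 / N : ℝ) * ∑ n, ∑ k, Z' n k * a n k) := by
  filter_upwards [hsupp, ae_isGeneric c hac] with a ha hgen ZLP hbox hcost hrow hopt
  have hZ : IsLPOptimal c b a ZLP :=
    ⟨⟨hbox, hcost, hrow⟩, fun W hW => hopt W hW.1 hW.2.1 hW.2.2⟩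
  have hN_inv : (0 : ℝ) ≤ 1 / N := by positivity
  refine ⟨⟨fun n => roundRow_eq_zero_or_one base (hrow n), ?_,
    fun n => sum_roundRow base (hrow n)⟩, fun Z hZ01 hZcost hZrow => ?_⟩
  · exact (mul_le_mul_of_nonneg_left (sum_le_sum fun n _ =>
      sum_roundRow_mul_le base (fun k => (hbox n k).1) hc hbase) hN_inv).trans hcost
  · have hZle := hopt Z (fun n k => by rcases hZ01 n k with h | h <;> simp [h]) hZcost hZrow
    have hround := sum_sum_mul_le_sum_sum_roundRow_mul_add_one base (fun n k => (hbox n k).1)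
      hrow ha fun _ _ => hZ.eq_of_card_ne_one hgen
    calc _ ≤ (1 / N : ℝ) * ∑ n, ∑ k, ZLP n k * a n k - 1 / N := by linarith
      _ ≤ (1 / N : ℝ) * ∑ n, ∑ k, roundRow base (ZLP n) k * a n k := by
        linarith [mul_le_mul_of_nonneg_left hround hN_inv]

/-- Offline guarantee: almost surely over the accuracy values, rounding any optimal
LP solution (assigning the zero-cost base service on rows with not exactly one
nonzero entry) gives a feasible ILP solution whose average accuracy is within 1/N
of every feasible ILP solution's average accuracy. -/
theorem stmt_6 {N K : ℕ} (hN : 0 < N) (hK : 0 < K)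
    (c : Fin K → ℝ) (base : Fin K) (b : ℝ)
    (hc : ∀ k, 0 ≤ c k) (hbase : c base = 0)
    (μ : Measure (Fin N → Fin K → ℝ)) [IsProbabilityMeasure μ]
    (hac : μ ≪ volume)
    (hsupp : ∀ᵐ a ∂μ, ∀ n k, a n k ∈ Set.Icc (0:ℝ) 1) :
    ∀ᵐ a ∂μ, ∀ ZLP : Fin N → Fin K → ℝ,
      (∀ n k, ZLP n k ∈ Set.Icc (0:ℝ) 1) →
      (1 / N : ℝ) * ∑ n, ∑ k, ZLP n k * c k ≤ b →
      (∀ n, ∑ k, ZLP n k = 1) →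
      (∀ W : Fin N → Fin K → ℝ,
        (∀ n k, W n k ∈ Set.Icc (0:ℝ) 1) →
        (1 / N : ℝ) * ∑ n, ∑ k, W n k * c k ≤ b →
        (∀ n, ∑ k, W n k = 1) →
        (1 / N : ℝ) * ∑ n, ∑ k, W n k * a n k ≤
          (1 / N : ℝ) * ∑ n, ∑ k, ZLP n k * a n k) →
      (let Z' : Fin N → Fin K → ℝ := fun n k =>
        if (((Finset.univ : Finset (Fin K)).filter fun k' => ZLP n k' ≠ 0)).card = 1
        then ZLP n k else (if k = base then 1 else 0);
      ((∀ n k, Z' n k = 0 ∨ Z' n k = 1) ∧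
        (1 / N : ℝ) * ∑ n, ∑ k, Z' n k * c k ≤ b ∧
        (∀ n, ∑ k, Z' n k = 1)) ∧
      ∀ Z : Fin N → Fin K → ℝ,
        (∀ n k, Z n k = 0 ∨ Z n k = 1) →
        (1 / N : ℝ) * ∑ n, ∑ k, Z n k * c k ≤ b →
        (∀ n, ∑ k, Z n k = 1) →
        (1 / N : ℝ) * ∑ n, ∑ k, Z n k * a n k - 1 / N ≤
          (1 / N : ℝ) * ∑ n, ∑ k, Z' n k * a n k) :=
  stmt_6_general c base b hc hbase μ hac hsupp
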